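/- arXiv:0912.3725 — 2 statements merged into one kernel-verified Lean document; each statement's English description precedes it below -/
import Mathlib

section
/- Dirichlet's theorem on simultaneous Diophantine approximation: for any x ∈ ℝ^m (m ≥ 1) and any real Q > 1, there exist an integer q with 1 ≤ q < Q and a vector p ∈ ℤ^m such that |qx - p| ≤ Q^{-1/m}, where |·| is the supremum norm. -/
open MeasureTheory Submodule Set Filter

lemma dirichlet_mink (m : ℕ) (hm : 1 ≤ m) (x : Fin m → ℝ) (Q : ℝ) (hQ : 1 < Q) :
    ∃ (q : ℤ) (p : Fin m → ℤ), 0 < q ∧ (q : ℝ) ≤ Q ∧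
      ∀ i, |(q : ℝ) * x i - (p i : ℝ)| ≤ Q ^ (-1 / (m : ℝ)) := by
  have hQ0 : (0:ℝ) < Q := by linarith
  have hm0 : (0:ℝ) < m := by exact_mod_cast hm
  set c : ℝ := Q ^ (-1 / (m : ℝ)) with hc_def
  have hc0 : 0 < c := Real.rpow_pos_of_pos hQ0 _
  have hneg : -1 / (m:ℝ) < 0 := div_neg_of_neg_of_pos (by norm_num) hm0
  have hc1 : c < 1 := Real.rpow_lt_one_of_one_lt_of_neg hQ hneg
  have hcm : c ^ m = Q⁻¹ := by
    rw [hc_def, ← Real.rpow_natCast (Q ^ (-1/(m:ℝ))) m, ← Real.rpow_mul hQ0.le]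
    rw [show (-1/(m:ℝ)) * m = -1 by field_simp]
    exact Real.rpow_neg_one Q
  -- the linear map
  set M : Matrix (Fin (m+1)) (Fin (m+1)) ℝ := fun j k =>
    if j = 0 then (if k = 0 then 1 else 0)
    else if k = 0 then (Fin.cases 0 x j)
    else if k = j then -1 else 0 with hM_def
  set T := Matrix.toLin' M with hT_def
  have hT : ∀ (y : Fin (m+1) → ℝ), T y = Fin.cons (y 0) (fun i => x i * y 0 - y i.succ) := by
    intro y
    funext j
    rw [hT_def, Matrix.toLin'_apply]
    induction j using Fin.cases with
    | zero =>
      simp only [Matrix.mulVec, dotProduct, hM_def, Fin.cons_zero]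
      simp [ite_mul]
    | succ i =>
      simp only [Matrix.mulVec, dotProduct, hM_def, Fin.cons_succ]
      have : ∀ k : Fin (m+1),
          (if i.succ = 0 then (if k = 0 then (1:ℝ) else 0)
           else if k = 0 then (Fin.cases 0 x i.succ)
           else if k = i.succ then -1 else 0) * y k
          = (if k = 0 then x i * y 0 else 0) + (if k = i.succ then -(y k) else 0) := by
        intro k
        rcases eq_or_ne k 0 with rfl | hk
        · simp [Fin.succ_ne_zero, (Fin.succ_ne_zero i).symm]
        · rcases eq_or_ne k i.succ with rfl | hk2
          · simp [Fin.succ_ne_zero, hk]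
          · simp [Fin.succ_ne_zero, hk, hk2]
      rw [Finset.sum_congr rfl (fun k _ => this k), Finset.sum_add_distrib]
      rw [Finset.sum_ite_eq' Finset.univ (0 : Fin (m+1)) (fun _ => x i * y 0),
        Finset.sum_ite_eq' Finset.univ (i.succ) (fun k => -(y k))]
      simp
      ring
  have hdet : LinearMap.det T = (-1) ^ m := by
    rw [hT_def, LinearMap.det_toLin']
    have htri : M.BlockTriangular OrderDual.toDual := by
      intro j k hjk
      have hjk' : (j : Fin (m+1)) < k := hjk
      have hk0 : k ≠ 0 := by
        intro h; subst h; exact absurd hjk' (by simp [Fin.lt_iff_val_lt_val])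
      have hkj : k ≠ j := (ne_of_gt hjk')
      rcases eq_or_ne j 0 with rfl | hj0
      · simp [hM_def, hk0]
      · simp [hM_def, hj0, hk0, hkj]
    rw [Matrix.det_of_lowerTriangular M htri]
    rw [Fin.prod_univ_succ]
    have h0 : M 0 0 = 1 := by simp [hM_def]
    have hsucc : ∀ i : Fin m, M i.succ i.succ = -1 := by
      intro i
      simp [hM_def, Fin.succ_ne_zero, (Fin.succ_ne_zero i).symm]
    simp [h0, hsucc]
  -- the convex body
  set C : Fin (m+1) → ℝ := Fin.cons Q (fun _ => c) with hC_def
  set box : Set (Fin (m+1) → ℝ) := Set.pi Set.univ (fun j => Icc (-(C j)) (C j)) with hbox_def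
  set s : Set (Fin (m+1) → ℝ) := T ⁻¹' box with hs_def
  have hmem : ∀ y, y ∈ s ↔ (|y 0| ≤ Q ∧ ∀ i : Fin m, |x i * y 0 - y i.succ| ≤ c) := by
    intro y
    rw [hs_def, Set.mem_preimage, hbox_def, Set.mem_pi]
    simp only [Set.mem_univ, forall_true_left, Set.mem_Icc, ← abs_le, hT y]
    rw [Fin.forall_fin_succ]
    simp [hC_def]
  have hsymm : ∀ y ∈ s, -y ∈ s := by
    intro y hy
    rw [hmem] at hy ⊢
    constructor
    · simpa using hy.1
    · intro i
      have := hy.2 i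
      rw [show x i * (-y) 0 - (-y) i.succ = -(x i * y 0 - y i.succ) by simp; ring, abs_neg]
      exact this
  have hconv : Convex ℝ s := by
    refine Convex.linear_preimage ?_ T
    exact convex_pi (fun j _ => convex_Icc _ _)
  have hTT : ∀ y, T (T y) = y := by
    intro y
    funext j
    rw [hT (T y)]
    induction j using Fin.cases with
    | zero => simp [hT y]
    | succ i => simp [hT y]
  have hcpt : IsCompact s := by
    have hbc : IsCompact box := isCompact_univ_pi (fun j => isCompact_Icc)
    have himg : s = T '' box := by
      ext y
      constructor
      · intro hy; exact ⟨T y, hy, hTT y⟩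
      · rintro ⟨z, hz, rfl⟩
        rw [hs_def, Set.mem_preimage, hTT z]; exact hz
    rw [himg]
    exact hbc.image T.continuous_of_finiteDimensional
  have hvolbox : volume box = ENNReal.ofReal (2 * Q) * ENNReal.ofReal (2 * c) ^ m := by
    rw [hbox_def, volume_pi_pi]
    have : ∀ j, volume (Icc (-(C j)) (C j)) = ENNReal.ofReal (2 * C j) := by
      intro j; rw [Real.volume_Icc, sub_neg_eq_add, two_mul]
    simp_rw [this]
    rw [Fin.prod_univ_succ]
    simp [hC_def]
  have hvols : volume s = 2 ^ (m + 1) := by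
    rw [hs_def, Measure.addHaar_preimage_linearMap volume
      (show LinearMap.det T ≠ 0 by rw [hdet]; positivity), hvolbox]
    rw [hdet]
    have : |((-1:ℝ) ^ m)⁻¹| = 1 := by
      rw [abs_inv, abs_pow, abs_neg, abs_one, one_pow]; norm_num
    rw [this, ENNReal.ofReal_one, one_mul]
    rw [← ENNReal.ofReal_pow (by positivity), ← ENNReal.ofReal_mul (by positivity)]
    have : 2 * Q * (2 * c) ^ m = 2 ^ (m+1) := by
      rw [mul_pow, hcm]
      field_simp
      ring
    rw [this]
    rw [ENNReal.ofReal_pow (by norm_num)]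
    norm_num
  -- apply Minkowski
  set b := Pi.basisFun ℝ (Fin (m+1)) with hb_def
  have h_fund := ZSpan.isAddFundamentalDomain' b volume
  have : Countable (span ℤ (Set.range b)).toAddSubgroup := by
    change Countable (span ℤ (Set.range b))
    infer_instance
  have hvolF : volume (ZSpan.fundamentalDomain b) = 1 := by
    rw [ZSpan.volume_fundamentalDomain]
    have : Matrix.of ⇑b = 1 := by
      ext i j
      simp [hb_def, Matrix.one_apply, Pi.single_apply, eq_comm]
    rw [this]
    simp
  have hle : volume (ZSpan.fundamentalDomain b) * 2 ^ Module.finrank ℝ (Fin (m+1) → ℝ)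
      ≤ volume s := by
    rw [hvolF, one_mul, hvols, Module.finrank_fin_fun]
  obtain ⟨⟨v, hv⟩, h_nz, h_mem⟩ :=
    exists_ne_zero_mem_lattice_of_measure_mul_two_pow_le_measure h_fund hsymm hconv hcpt hle
  rw [Submodule.mem_toAddSubgroup] at hv
  have hints : ∀ j, ∃ n : ℤ, (n : ℝ) = v j := by
    intro j
    obtain ⟨n, hn⟩ := (b.mem_span_iff_repr_mem ℤ v).mp hv j
    exact ⟨n, by simpa [hb_def] using hn⟩
  choose w hw using hints
  have hmemv := (hmem v).mp h_mem
  have hvne : v ≠ 0 := by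
    intro h
    exact h_nz (by ext; simp [h])
  have hw0 : w 0 ≠ 0 := by
    intro h0
    have hv0 : v 0 = 0 := by rw [← hw 0, h0]; simp
    apply hvne
    funext j
    induction j using Fin.cases with
    | zero => exact hv0
    | succ i =>
      have := hmemv.2 i
      rw [hv0, mul_zero, zero_sub, abs_neg] at this
      have h1 : |(w i.succ : ℝ)| ≤ c := by rw [hw i.succ]; exact this
      have h2 : |w i.succ| < 1 := by
        have : |(w i.succ : ℝ)| < 1 := lt_of_le_of_lt h1 hc1
        exact_mod_cast (by push_cast; exact this : (|w i.succ| : ℝ) < 1)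
      have : w i.succ = 0 := Int.abs_lt_one_iff.mp h2
      rw [← hw i.succ, this]; simp
  -- extract q, p with correct signs
  have habs0 : |(w 0 : ℝ)| ≤ Q := by rw [hw 0]; exact hmemv.1
  have habs : ∀ i : Fin m, |(w 0 : ℝ) * x i - (w i.succ : ℝ)| ≤ c := by
    intro i
    rw [hw 0, hw i.succ, mul_comm]
    exact hmemv.2 i
  rcases lt_or_gt_of_ne hw0 with hneg0 | hpos0
  · refine ⟨-(w 0), fun i => -(w i.succ), by omega, ?_, ?_⟩
    · rw [Int.cast_neg]
      calc (-(w 0 : ℝ)) ≤ |(w 0 : ℝ)| := neg_le_abs _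
        _ ≤ Q := habs0
    · intro i
      rw [Int.cast_neg, Int.cast_neg]
      rw [show (-(w 0:ℝ)) * x i - (-(w i.succ : ℝ)) = -((w 0:ℝ) * x i - (w i.succ : ℝ)) by ring,
        abs_neg]
      exact habs i
  · refine ⟨w 0, fun i => w i.succ, hpos0, ?_, ?_⟩
    · calc ((w 0 : ℝ)) ≤ |(w 0 : ℝ)| := le_abs_self _
        _ ≤ Q := habs0
    · exact habs


/-- Dirichlet's theorem on simultaneous Diophantine approximation, sup norm version:
for `x ∈ ℝ^m` (`m ≥ 1`) and `Q > 1`, there are `q ∈ ℕ` with `1 ≤ q < Q` and `p ∈ ℤ^m`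
with `|qx - p| ≤ Q^{-1/m}`. -/
theorem stmt1 (m : ℕ) (hm : 1 ≤ m) (x : Fin m → ℝ) (Q : ℝ) (hQ : 1 < Q) :
    ∃ (q : ℕ) (p : Fin m → ℤ), 1 ≤ q ∧ (q : ℝ) < Q ∧
      ‖(fun i => (q : ℝ) * x i - (p i : ℝ))‖ ≤ Q ^ (-1 / (m : ℝ)) := by
  have hQ0 : (0:ℝ) < Q := by linarith
  have hm0 : (0:ℝ) < m := by exact_mod_cast hm
  set c : ℝ := Q ^ (-1 / (m : ℝ)) with hc_def
  have hc0 : 0 < c := Real.rpow_pos_of_pos hQ0 _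
  -- the approximating sequence
  set Qs : ℕ → ℝ := fun n => Q - (Q - 1) / (n + 2) with hQs_def
  have hQs1 : ∀ n, 1 < Qs n := by
    intro n
    have h2 : (0:ℝ) < (n:ℝ) + 2 := by positivity
    have : (Q - 1) / (n + 2) < Q - 1 := by
      rw [div_lt_iff₀ h2]
      nlinarith
    simp only [hQs_def]
    linarith
  have hQsQ : ∀ n, Qs n < Q := by
    intro n
    have h2 : (0:ℝ) < (n:ℝ) + 2 := by positivity
    have : 0 < (Q - 1) / (n + 2) := div_pos (by linarith) h2
    simp only [hQs_def]; linarith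
  have key : ∀ n : ℕ, ∃ (q : ℤ) (p : Fin m → ℤ), 0 < q ∧ (q : ℝ) ≤ Qs n ∧
      ∀ i, |(q : ℝ) * x i - (p i : ℝ)| ≤ (Qs n) ^ (-1 / (m : ℝ)) :=
    fun n => dirichlet_mink m hm x (Qs n) (hQs1 n)
  choose qf pf hq0 hqle hbound using key
  -- the finite candidate set
  set S : Set (ℤ × (Fin m → ℤ)) :=
    {w | 0 < w.1 ∧ (w.1 : ℝ) < Q ∧ ∀ i, |(w.1:ℝ) * x i - (w.2 i : ℝ)| ≤ 1} with hS_def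
  have hSfin : S.Finite := by
    apply Set.Finite.subset (Set.Finite.prod (Set.finite_Icc (0:ℤ) ⌈Q⌉)
      (Set.Finite.pi (fun i : Fin m => Set.finite_Icc (-(⌈Q * |x i| + 1⌉)) ⌈Q * |x i| + 1⌉)))
    rintro ⟨q, p⟩ ⟨h1, h2, h3⟩
    have hqQ : (q:ℝ) ≤ (⌈Q⌉ : ℝ) := le_trans h2.le (Int.le_ceil Q)
    refine Set.mem_prod.mpr ⟨Set.mem_Icc.mpr ⟨h1.le, by exact_mod_cast hqQ⟩, ?_⟩
    rw [Set.mem_pi]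
    intro i _
    rw [Set.mem_Icc]
    have hb := h3 i
    have h4 : |(p i : ℝ)| ≤ Q * |x i| + 1 := by
      have h7 : |(p i : ℝ)| - |(q:ℝ) * x i| ≤ |(q:ℝ) * x i - (p i : ℝ)| := by
        rw [abs_sub_comm]
        exact (abs_sub_abs_le_abs_sub _ _)
      have hqx : |(q:ℝ) * x i| ≤ Q * |x i| := by
        rw [abs_mul]
        apply mul_le_mul_of_nonneg_right _ (abs_nonneg _)
        rw [abs_of_pos (by exact_mod_cast h1 : (0:ℝ) < (q:ℝ))]
        exact h2.le
      linarith
    have h5 : |(p i : ℝ)| ≤ (⌈Q * |x i| + 1⌉ : ℝ) := le_trans h4 (Int.le_ceil _)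
    rw [← Int.cast_abs] at h5
    have h6 : |p i| ≤ ⌈Q * |x i| + 1⌉ := by exact_mod_cast h5
    exact abs_le.mp h6
  have hnegle : -1 / (m:ℝ) ≤ 0 := le_of_lt (div_neg_of_neg_of_pos (by norm_num) hm0)
  have hmemS : ∀ n, (qf n, pf n) ∈ S := by
    intro n
    refine ⟨hq0 n, lt_of_le_of_lt (hqle n) (hQsQ n), fun i => le_trans (hbound n i) ?_⟩
    exact Real.rpow_le_one_of_one_le_of_nonpos (hQs1 n).le hnegle
  haveI : Finite ↥S := hSfin.to_subtype
  set f : ℕ → ↥S := fun n => ⟨(qf n, pf n), hmemS n⟩ with hf_def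
  obtain ⟨⟨⟨q, p⟩, hqp⟩, hinf⟩ := Finite.exists_infinite_fiber f
  have hfib : (f ⁻¹' {⟨(q, p), hqp⟩}).Infinite := Set.infinite_coe_iff.mp hinf
  have hq_pos : 0 < q := hqp.1
  have hq_lt : (q:ℝ) < Q := hqp.2.1
  -- limit argument
  have htQ : Tendsto Qs atTop (nhds Q) := by
    have h1 : Tendsto (fun n : ℕ => ((n:ℝ) + 2)) atTop atTop :=
      tendsto_atTop_add_const_right atTop 2 tendsto_natCast_atTop_atTop
    have h2 : Tendsto (fun n : ℕ => (Q - 1) / ((n:ℝ) + 2)) atTop (nhds 0) :=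
      Tendsto.div_atTop tendsto_const_nhds h1
    have h3 : Tendsto (fun n : ℕ => Q - (Q - 1) / ((n:ℝ) + 2)) atTop (nhds (Q - 0)) :=
      Tendsto.sub tendsto_const_nhds h2
    simpa using h3
  have htc : Tendsto (fun n => Qs n ^ (-1/(m:ℝ))) atTop (nhds c) := by
    have hcont := (Real.continuousAt_rpow_const Q (-1/(m:ℝ)) (Or.inl (ne_of_gt hQ0)))
    exact hcont.tendsto.comp htQ
  have hbd : ∀ i, |(q:ℝ) * x i - (p i : ℝ)| ≤ c := by
    intro i
    refine le_of_forall_pos_le_add (fun ε hε => ?_)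
    have hev : ∀ᶠ n in atTop, Qs n ^ (-1/(m:ℝ)) < c + ε :=
      htc.eventually_lt_const (by linarith)
    obtain ⟨N, hN⟩ := eventually_atTop.mp hev
    obtain ⟨n, hn_mem, hn_gt⟩ := Set.Infinite.exists_gt hfib N
    have hfn : qf n = q ∧ pf n = p := by
      have := Set.mem_preimage.mp hn_mem
      rw [Set.mem_singleton_iff, hf_def] at this
      have h' : ((qf n, pf n) : ℤ × (Fin m → ℤ)) = (q, p) := congrArg Subtype.val this
      exact ⟨congrArg Prod.fst h', congrArg Prod.snd h'⟩
    have := hbound n i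
    rw [hfn.1, hfn.2] at this
    exact le_trans this (le_of_lt (hN n (le_of_lt hn_gt)))
  refine ⟨q.toNat, p, ?_, ?_, ?_⟩
  · omega
  · have hcast : ((q.toNat : ℕ) : ℝ) = (q : ℝ) := by
      rw [← Int.cast_natCast, Int.toNat_of_nonneg hq_pos.le]
    rw [hcast]; exact hq_lt
  · rw [show ((q.toNat : ℕ) : ℝ) = (q : ℝ) by
      rw [← Int.cast_natCast, Int.toNat_of_nonneg hq_pos.le]]
    refine (pi_norm_le_iff_of_nonneg hc0.le).mpr (fun i => ?_)
    rw [Real.norm_eq_abs]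
    exact hbd i
end

section
/- Let ω ∈ ℝⁿ be T-periodic, let l(I) = ω·I be the corresponding linear Hamiltonian on 𝕋ⁿ × ℝⁿ with flow Φₛˡ(θ, I) = (θ + sω, I), and let f : 𝕋ⁿ × ℝⁿ → ℝ be smooth. Define the average [f] = (1/T) ∫₀ᵀ f ∘ Φₛˡ ds and χ = (1/T) ∫₀ᵀ (f - [f]) ∘ Φₛˡ · s ds. Then {χ, l} = f - [f], where {·,·} is the Poisson bracket; in particular since χ and [f] do not depend on I beyond f's dependence, the homological equation along a periodic orbit is solved explicitly without Fourier series. -/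
open MeasureTheory intervalIntegral Set Metric

/-- Differentiation under the integral sign for `x ↦ ∫ s in 0..T, F (x + s•ω) * φ s`. -/
lemma aux_param (n : ℕ) (F : (Fin n → ℝ) → ℝ) (hF : ContDiff ℝ (⊤ : ℕ∞) F)
    (ω : Fin n → ℝ) (φ : ℝ → ℝ) (hφ : Continuous φ) (θ : Fin n → ℝ) (T : ℝ) :
    HasFDerivAt (fun x => ∫ s in (0:ℝ)..T, F (x + s • ω) * φ s)
      (∫ s in (0:ℝ)..T, φ s • fderiv ℝ F (θ + s • ω)) θ := by
  have hFc : Continuous F := hF.continuous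
  have hF' : Continuous (fderiv ℝ F) := hF.continuous_fderiv (by simp)
  have hderiv : ∀ (x : Fin n → ℝ) (s : ℝ),
      HasFDerivAt (fun y => F (y + s • ω) * φ s) (φ s • fderiv ℝ F (x + s • ω)) x := by
    intro x s
    have h1 : HasFDerivAt (fun y : Fin n → ℝ => y + s • ω)
        (ContinuousLinearMap.id ℝ (Fin n → ℝ)) x := (hasFDerivAt_id x).add_const _
    have h2 := (hF.differentiable (by simp) (x + s • ω)).hasFDerivAt
    have h3 := h2.comp x h1
    have h4 := h3.mul_const (φ s)
    simpa [ContinuousLinearMap.comp_id, smul_smul, mul_comm] using h4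
  have hcont : Continuous (fun p : (Fin n → ℝ) × ℝ =>
      φ p.2 • fderiv ℝ F (p.1 + p.2 • ω)) :=
    (hφ.comp continuous_snd).smul
      (hF'.comp (continuous_fst.add (continuous_snd.smul continuous_const)))
  have hK : IsCompact ((closedBall θ 1) ×ˢ (uIcc (0:ℝ) T)) :=
    (isCompact_closedBall θ 1).prod isCompact_uIcc
  obtain ⟨C, hC⟩ := hK.exists_bound_of_continuousOn hcont.continuousOn
  have key := hasFDerivAt_integral_of_dominated_of_fderiv_le''
    (μ := volume) (F := fun x s => F (x + s • ω) * φ s)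
    (F' := fun x s => φ s • fderiv ℝ F (x + s • ω)) (a := 0) (b := T)
    (bound := fun _ => C) (x₀ := θ) (s := ball θ 1) (ball_mem_nhds θ one_pos)
    ?_ ?_ ?_ ?_ ?_ ?_
  · exact key
  · filter_upwards with x
    exact ((hFc.comp (continuous_const.add (continuous_id.smul continuous_const))).mul
      hφ).aestronglyMeasurable
  · exact ((hFc.comp (continuous_const.add (continuous_id.smul continuous_const))).mul
      hφ).intervalIntegrable _ _
  · exact (hφ.smul (hF'.comp (continuous_const.add
      (continuous_id.smul continuous_const)))).aestronglyMeasurable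
  · filter_upwards [ae_restrict_mem measurableSet_uIoc] with t ht x hx
    exact hC (x, t) ⟨ball_subset_closedBall hx, uIoc_subset_uIcc ht⟩
  · exact intervalIntegrable_const
  · filter_upwards with t x _
    exact hderiv x t

/-- Solution of the homological equation along a periodic orbit: if `ω` is `T`-periodic,
`l(I) = ω·I` with flow `Φₛ(θ,I) = (θ + sω, I)`, `[f]` is the time average of `f` along the flow,
and `χ = T⁻¹ ∫₀ᵀ (f - [f]) ∘ Φₛ · s ds`, then `{χ, l} = ω·∂_θ χ = f - [f]`. -/
theorem stmt4 (n : ℕ) (ω : Fin n → ℝ) (T : ℝ) (hT : 0 < T)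
    (hper : ∀ i, ∃ z : ℤ, T * ω i = z)
    (f : (Fin n → ℝ) → (Fin n → ℝ) → ℝ)
    (hf : ContDiff ℝ (⊤ : ℕ∞) (fun p : (Fin n → ℝ) × (Fin n → ℝ) => f p.1 p.2))
    (hfper : ∀ (k : Fin n → ℤ) (θ I : Fin n → ℝ), f (θ + fun i => (k i : ℝ)) I = f θ I)
    (favg χ : (Fin n → ℝ) → (Fin n → ℝ) → ℝ)
    (hfavg : ∀ θ I, favg θ I = T⁻¹ * ∫ s in (0:ℝ)..T, f (θ + s • ω) I)
    (hχ : ∀ θ I, χ θ I = T⁻¹ * ∫ s in (0:ℝ)..T, (f (θ + s • ω) I - favg (θ + s • ω) I) * s) :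
    ∀ θ I, fderiv ℝ (fun θ' => χ θ' I) θ ω = f θ I - favg θ I := by
  intro θ I
  set F : (Fin n → ℝ) → ℝ := fun x => f x I with hFdef
  have hF : ContDiff ℝ (⊤ : ℕ∞) F := hf.comp (contDiff_id.prodMk contDiff_const)
  have hFc : Continuous F := hF.continuous
  have hflow : Continuous (fun s : ℝ => θ + s • ω) :=
    continuous_const.add (continuous_id.smul continuous_const)
  -- translation by T•ω is the identity on F
  have hTω : ∀ x : Fin n → ℝ, F (x + T • ω) = F x := by
    intro x
    have hk : (T • ω) = fun i => ((Classical.choose (hper i) : ℤ) : ℝ) := by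
      funext i
      simp only [Pi.smul_apply, smul_eq_mul]
      exact Classical.choose_spec (hper i)
    rw [hk]
    exact hfper _ x I
  have hGper : ∀ x : Fin n → ℝ, Function.Periodic (fun s : ℝ => F (x + s • ω)) T := by
    intro x s
    have : x + (s + T) • ω = (x + s • ω) + T • ω := by
      rw [add_smul]; abel
    simp only [this, hTω]
  -- favg is invariant under the flow
  have hfavg_shift : ∀ (x : Fin n → ℝ) (s : ℝ), favg (x + s • ω) I = favg x I := by
    intro x s
    rw [hfavg, hfavg]
    congr 1
    have h1 : (∫ u in (0:ℝ)..T, f (x + s • ω + u • ω) I)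
        = ∫ u in (0:ℝ)..T, F (x + (u + s) • ω) := by
      apply intervalIntegral.integral_congr
      intro u _
      have h : x + s • ω + u • ω = x + (u + s) • ω := by rw [add_smul]; abel
      exact congrArg (fun y : Fin n → ℝ => f y I) h
    rw [h1, intervalIntegral.integral_comp_add_right (fun u => F (x + u • ω)) s]
    have h2 := (hGper x).intervalIntegral_add_eq s 0
    simpa [zero_add, add_comm] using h2
  -- rewrite χ
  have hchi : (fun x => χ x I)
      = fun x => T⁻¹ * (∫ s in (0:ℝ)..T, F (x + s • ω) * s) - (T / 2) * favg x I := by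
    funext x
    rw [hχ]
    have hint1 : IntervalIntegrable (fun s : ℝ => F (x + s • ω) * s) volume 0 T :=
      ((hFc.comp (continuous_const.add (continuous_id.smul continuous_const))).mul
        continuous_id).intervalIntegrable _ _
    have hint2 : IntervalIntegrable (fun s : ℝ => favg x I * s) volume 0 T :=
      (continuous_const.mul continuous_id).intervalIntegrable _ _
    have heq : EqOn (fun s : ℝ => (f (x + s • ω) I - favg (x + s • ω) I) * s)
        (fun s : ℝ => F (x + s • ω) * s - favg x I * s) (uIcc (0:ℝ) T) := by
      intro s _
      simp only [hfavg_shift x s]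
      ring
    rw [intervalIntegral.integral_congr heq, intervalIntegral.integral_sub hint1 hint2,
      intervalIntegral.integral_const_mul, integral_id]
    field_simp
    ring
  -- derivatives under the integral sign
  have H1 := aux_param n F hF ω (fun s => s) continuous_id θ T
  have H2 := aux_param n F hF ω (fun _ => (1:ℝ)) continuous_const θ T
  set L1 : (Fin n → ℝ) →L[ℝ] ℝ := ∫ s in (0:ℝ)..T, (s : ℝ) • fderiv ℝ F (θ + s • ω) with hL1
  set L2 : (Fin n → ℝ) →L[ℝ] ℝ := ∫ s in (0:ℝ)..T, (1:ℝ) • fderiv ℝ F (θ + s • ω) with hL2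
  have Hfavg : HasFDerivAt (fun x => favg x I) (T⁻¹ • L2) θ := by
    have : (fun x => favg x I) = fun x => T⁻¹ * ∫ s in (0:ℝ)..T, F (x + s • ω) * 1 := by
      funext x; rw [hfavg]; simp [F]
    rw [this]
    exact H2.const_mul T⁻¹
  have Hχ : HasFDerivAt (fun x => χ x I) (T⁻¹ • L1 - (T / 2) • (T⁻¹ • L2)) θ := by
    rw [hchi]
    exact (H1.const_mul T⁻¹).sub (Hfavg.const_mul (T / 2))
  rw [Hχ.fderiv]
  -- evaluate at ω
  set g' : ℝ → ℝ := fun s => fderiv ℝ F (θ + s • ω) ω with hg'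
  have hg'c : Continuous g' :=
    ((hF.continuous_fderiv (by simp)).comp hflow).clm_apply continuous_const
  have hG' : ∀ s : ℝ, HasDerivAt (fun u : ℝ => F (θ + u • ω)) (g' s) s := by
    intro s
    have h1 : HasDerivAt (fun u : ℝ => θ + u • ω) ω s := by
      simpa using ((hasDerivAt_id s).smul_const ω).const_add θ
    exact ((hF.differentiable (by simp) (θ + s • ω)).hasFDerivAt).comp_hasDerivAt s h1
  have hCLM : Continuous (fun s : ℝ => fderiv ℝ F (θ + s • ω)) :=
    (hF.continuous_fderiv (by simp)).comp hflow
  have hii1 : IntervalIntegrable (fun s : ℝ => s • fderiv ℝ F (θ + s • ω)) volume 0 T :=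
    (continuous_id.smul hCLM).intervalIntegrable _ _
  have hii2 : IntervalIntegrable (fun s : ℝ => (1:ℝ) • fderiv ℝ F (θ + s • ω)) volume 0 T :=
    ((continuous_const (y := (1:ℝ))).smul hCLM).intervalIntegrable _ _
  have e1 : L1 ω = ∫ s in (0:ℝ)..T, s * g' s := by
    rw [hL1, ContinuousLinearMap.intervalIntegral_apply hii1]
    simp [hg', smul_eq_mul]
  have e2 : L2 ω = ∫ s in (0:ℝ)..T, g' s := by
    rw [hL2, ContinuousLinearMap.intervalIntegral_apply hii2]
    simp [hg']
  have hG0 : F (θ + (0:ℝ) • ω) = F θ := by simp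
  have hGT : F (θ + (T:ℝ) • ω) = F θ := hTω θ
  have eint : (∫ s in (0:ℝ)..T, g' s) = 0 := by
    rw [intervalIntegral.integral_eq_sub_of_hasDerivAt (fun s _ => hG' s)
      (hg'c.intervalIntegrable _ _)]
    rw [hGT, hG0, sub_self]
  have eG : (∫ s in (0:ℝ)..T, F (θ + s • ω)) = T * favg θ I := by
    rw [hfavg]
    field_simp; rfl
  have eparts : (∫ s in (0:ℝ)..T, s * g' s) = T * F θ - T * favg θ I := by
    have := intervalIntegral.integral_mul_deriv_eq_deriv_mul
      (a := (0:ℝ)) (b := T) (u := fun s : ℝ => s) (u' := fun _ => (1:ℝ))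
      (v := fun s : ℝ => F (θ + s • ω)) (v' := g')
      (fun x _ => hasDerivAt_id x) (fun x _ => hG' x)
      intervalIntegrable_const (hg'c.intervalIntegrable _ _)
    rw [this]
    simp only [one_mul, hGT, hG0]
    rw [eG]
    ring
  simp only [ContinuousLinearMap.sub_apply, ContinuousLinearMap.smul_apply, e1, e2, eparts,
    eint, smul_eq_mul]
  field_simp
  simp only [hFdef]
  ring
end
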